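/- Lemma: Let C_X, C_Z ⊆ 𝔽₂ⁿ be a CSS code with a set of checks of check weight at most 4 such that every qubit is contained in exactly two X checks and exactly two Z checks, and suppose every nontrivial logical operator has Hamming weight at least 3 (distance d > 2). If some X check and some Z check overlap on four qubits (their supports share exactly four elements), then there exist two distinct qubits i and j that are disentangled: the indicator vector e_i + e_j of {i, j} lies in both C_X^⊥ and C_Z^⊥. -/

import Mathlib

/-- Dot product of two vectors over `ZMod 2` (the standard bilinear form). -/
def dotp {i : Type*} [Fintype i] (x y : i → ZMod 2) : ZMod 2 := ∑ j, x j * y j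

/-- The dual code: the orthogonal complement of `C` with respect to the
standard bilinear form `dotp`. -/
def dualCode {i : Type*} [Fintype i] (C : Submodule (ZMod 2) (i → ZMod 2)) :
    Submodule (ZMod 2) (i → ZMod 2) where
  carrier := {u | ∀ v ∈ C, dotp u v = 0}
  add_mem' := by
    intro a b ha hb v hv
    have h1 := ha v hv
    have h2 := hb v hv
    simp only [dotp, Pi.add_apply, add_mul, Finset.sum_add_distrib] at h1 h2 ⊢
    rw [h1, h2, add_zero]
  zero_mem' := by
    intro v hv
    simp [dotp]
  smul_mem' := by
    intro c a ha v hv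
    have h1 := ha v hv
    simp only [dotp] at h1
    simp only [dotp, Pi.smul_apply, smul_eq_mul, mul_assoc, ← Finset.mul_sum]
    rw [h1, mul_zero]

/-- The support of a binary vector, as a `Finset`. -/
def suppF {n : ℕ} (s : Fin n → ZMod 2) : Finset (Fin n) :=
  Finset.univ.filter fun i => s i ≠ 0

section Aux

variable {ι : Type*} [Fintype ι]

lemma mem_dualCode {C : Submodule (ZMod 2) (ι → ZMod 2)} {u : ι → ZMod 2} :
    u ∈ dualCode C ↔ ∀ v ∈ C, dotp u v = 0 := Iff.rfl

lemma dotp_comm (x y : ι → ZMod 2) : dotp x y = dotp y x := by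
  simp [dotp, mul_comm]

/-- The dot product as a bilinear form. -/
noncomputable def dotB (ι : Type*) [Fintype ι] : LinearMap.BilinForm (ZMod 2) (ι → ZMod 2) :=
  LinearMap.mk₂ (ZMod 2) dotp
    (by intro x y z; simp [dotp, add_mul, Finset.sum_add_distrib])
    (by intro c x y; simp [dotp, Finset.mul_sum, mul_assoc])
    (by intro x y z; simp [dotp, mul_add, Finset.sum_add_distrib])
    (by intro c x y; simp [dotp, Finset.mul_sum, mul_left_comm])

@[simp] lemma dotB_apply (x y : ι → ZMod 2) : dotB ι x y = dotp x y := rfl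

lemma dotp_single_right [DecidableEq ι] (s : ι → ZMod 2) (i : ι) :
    dotp s (Pi.single i 1) = s i := by
  simp [dotp, Pi.single_apply, mul_ite, Finset.sum_ite_eq, Finset.sum_ite_eq']

lemma dotp_single_left [DecidableEq ι] (s : ι → ZMod 2) (i : ι) :
    dotp (Pi.single i 1) s = s i := by
  rw [dotp_comm]; exact dotp_single_right s i

lemma dualCode_eq_orthogonal (C : Submodule (ZMod 2) (ι → ZMod 2)) :
    dualCode C = (dotB ι).orthogonal C := by
  ext u
  simp only [mem_dualCode, LinearMap.BilinForm.mem_orthogonal_iff, LinearMap.BilinForm.IsOrtho,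
    dotB_apply]
  constructor
  · intro h v hv; rw [dotp_comm]; exact h v hv
  · intro h v hv; rw [dotp_comm]; exact h v hv

lemma dotB_nondeg : (dotB ι).Nondegenerate := by
  classical
  refine ⟨?_, ?_⟩
  · intro x hx
    funext i
    simpa [dotp_single_right] using hx (Pi.single i 1)
  · intro x hx
    funext i
    simpa [dotp_single_left] using hx (Pi.single i 1)

lemma dotB_refl : (dotB ι).IsRefl := by
  intro x y h
  simpa [dotp_comm x y] using h

lemma dual_dual (C : Submodule (ZMod 2) (ι → ZMod 2)) :
    dualCode (dualCode C) = C := by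
  rw [dualCode_eq_orthogonal, dualCode_eq_orthogonal,
    LinearMap.BilinForm.orthogonal_orthogonal dotB_nondeg dotB_refl]

lemma dualCode_le_dualCode {C₁ C₂ : Submodule (ZMod 2) (ι → ZMod 2)} (h : C₁ ≤ C₂) :
    dualCode C₂ ≤ dualCode C₁ := fun _ hu v hv => hu v (h hv)

lemma mem_dualCode_span {S : Finset (ι → ZMod 2)} {w : ι → ZMod 2}
    (h : ∀ s ∈ S, dotp w s = 0) :
    w ∈ dualCode (Submodule.span (ZMod 2) (↑S : Set (ι → ZMod 2))) := by
  intro v hv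
  have hle : Submodule.span (ZMod 2) (↑S : Set (ι → ZMod 2)) ≤ LinearMap.ker (dotB ι w) := by
    rw [Submodule.span_le]
    intro s hs
    simpa using h s (by simpa using hs)
  simpa using hle hv

lemma zmod2_cases : ∀ a : ZMod 2, a = 0 ∨ a = 1 := by decide

lemma zmod2_ne_zero {a : ZMod 2} (h : a ≠ 0) : a = 1 := by
  rcases zmod2_cases a with h0 | h1
  · exact absurd h0 h
  · exact h1

lemma dotp_pair [DecidableEq ι] (a b : ι) (s : ι → ZMod 2) :
    dotp (Pi.single a 1 + Pi.single b 1) s = s a + s b := by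
  simp only [dotp, Pi.add_apply, add_mul, Finset.sum_add_distrib]
  rw [← dotp, ← dotp, dotp_single_left, dotp_single_left]

end Aux

section Aux2

variable {n : ℕ}

lemma hn_pair {i j : Fin n} (h : i ≠ j) :
    hammingNorm (Pi.single i 1 + Pi.single j 1 : Fin n → ZMod 2) = 2 := by
  have hset : (Finset.univ.filter
      fun m => (Pi.single i 1 + Pi.single j 1 : Fin n → ZMod 2) m ≠ 0) = {i, j} := by
    ext m
    simp only [Finset.mem_filter, Finset.mem_univ, true_and, Finset.mem_insert,
      Finset.mem_singleton, Pi.add_apply, Pi.single_apply]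
    by_cases hmi : m = i <;> by_cases hmj : m = j <;>
      simp [hmi, hmj, h, h.symm]
  have : hammingNorm (Pi.single i 1 + Pi.single j 1 : Fin n → ZMod 2) =
      (Finset.univ.filter
        fun m => (Pi.single i 1 + Pi.single j 1 : Fin n → ZMod 2) m ≠ 0).card := rfl
  rw [this, hset, Finset.card_pair h]

lemma hammingNorm_eq_card_suppF (s : Fin n → ZMod 2) : hammingNorm s = (suppF s).card := rfl

/-- If `s` is orthogonal to `x` and shares a support point `i` with `x`,
then they share a second support point. -/
lemma exists_second {s x : Fin n → ZMod 2} (h0 : dotp s x = 0) {i : Fin n}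
    (hxi : x i ≠ 0) (hsi : s i ≠ 0) : ∃ j, j ≠ i ∧ x j ≠ 0 ∧ s j ≠ 0 := by
  by_contra hcon
  push_neg at hcon
  have hsum : dotp s x = s i * x i := by
    refine Finset.sum_eq_single_of_mem i (Finset.mem_univ i) ?_
    intro j _ hji
    by_cases hxj : x j = 0
    · rw [hxj, mul_zero]
    · rw [hcon j hji hxj, zero_mul]
  rw [hsum, zmod2_ne_zero hsi, zmod2_ne_zero hxi, mul_one] at h0
  exact one_ne_zero h0

/-- If the set of checks containing a given qubit has exactly two elements `x, y`,
then any check containing that qubit is `x` or `y`. -/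
lemma check_mem_pair {S : Finset (Fin n → ZMod 2)} {x y : Fin n → ZMod 2} {i : Fin n}
    (hcard : (S.filter fun s => s i ≠ 0).card = 2) (hx : x ∈ S) (hy : y ∈ S) (hxy : x ≠ y)
    (hxi : x i ≠ 0) (hyi : y i ≠ 0) {s : Fin n → ZMod 2} (hs : s ∈ S) (hsi : s i ≠ 0) :
    s = x ∨ s = y := by
  have hsub : ({x, y} : Finset (Fin n → ZMod 2)) ⊆ S.filter fun s => s i ≠ 0 := by
    intro t ht
    rcases Finset.mem_insert.mp ht with rfl | ht
    · exact Finset.mem_filter.mpr ⟨hx, hxi⟩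
    · rw [Finset.mem_singleton] at ht; subst ht
      exact Finset.mem_filter.mpr ⟨hy, hyi⟩
  have heq : ({x, y} : Finset (Fin n → ZMod 2)) = S.filter fun s => s i ≠ 0 :=
    Finset.eq_of_subset_of_card_le hsub (by rw [hcard, Finset.card_pair hxy])
  have : s ∈ ({x, y} : Finset (Fin n → ZMod 2)) := by
    rw [heq]; exact Finset.mem_filter.mpr ⟨hs, hsi⟩
  simpa using this

/-- If two distinct checks `x, y` both contain qubits `i` and `j`, and every qubit is in
exactly two checks, then every check meets `{i, j}` evenly. -/
lemma perp_all {S : Finset (Fin n → ZMod 2)}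
    (hdeg : ∀ i : Fin n, (S.filter fun s => s i ≠ 0).card = 2)
    {x y : Fin n → ZMod 2} (hx : x ∈ S) (hy : y ∈ S) (hxy : x ≠ y) {i j : Fin n}
    (hxi : x i ≠ 0) (hxj : x j ≠ 0) (hyi : y i ≠ 0) (hyj : y j ≠ 0)
    {s : Fin n → ZMod 2} (hs : s ∈ S) : s i + s j = 0 := by
  have key : s i ≠ 0 ∨ s j ≠ 0 → (s i = 1 ∧ s j = 1) := by
    intro hcase
    have hmem : s = x ∨ s = y := by
      rcases hcase with h | h
      · exact check_mem_pair (hdeg i) hx hy hxy hxi hyi hs h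
      · exact check_mem_pair (hdeg j) hx hy hxy hxj hyj hs h
    rcases hmem with rfl | rfl
    · exact ⟨zmod2_ne_zero hxi, zmod2_ne_zero hxj⟩
    · exact ⟨zmod2_ne_zero hyi, zmod2_ne_zero hyj⟩
  by_cases hsi : s i = 0
  · by_cases hsj : s j = 0
    · rw [hsi, hsj, add_zero]
    · rcases key (Or.inr hsj) with ⟨h1, _⟩
      exact absurd h1 (by rw [hsi]; decide)
  · rcases key (Or.inl hsi) with ⟨h1, h2⟩
    rw [h1, h2]; decide

end Aux2

/-- **Lemma.**  Let `(CX, CZ)` be a CSS code with a set of checks of check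
weight at most 4 such that every qubit is contained in exactly two X checks
and exactly two Z checks, and suppose every nontrivial logical operator has
Hamming weight at least 3 (distance `d > 2`).  If some X check and some Z
check overlap on exactly four qubits, then there exist two distinct
disentangled qubits `i, j`: the indicator vector of `{i, j}` lies in both
`CX^⊥` and `CZ^⊥`. -/
theorem css_weight_four_overlap_disentangled (n : ℕ)
    (CX CZ : Submodule (ZMod 2) (Fin n → ZMod 2))
    (hCSS : dualCode CX ≤ CZ)
    (SX SZ : Finset (Fin n → ZMod 2))
    (hSX : Submodule.span (ZMod 2) (↑SX : Set (Fin n → ZMod 2)) = dualCode CX)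
    (hSZ : Submodule.span (ZMod 2) (↑SZ : Set (Fin n → ZMod 2)) = dualCode CZ)
    (hwX : ∀ s ∈ SX, hammingNorm s ≤ 4)
    (hwZ : ∀ s ∈ SZ, hammingNorm s ≤ 4)
    (hdegX : ∀ i : Fin n, (SX.filter fun s => s i ≠ 0).card = 2)
    (hdegZ : ∀ i : Fin n, (SZ.filter fun s => s i ≠ 0).card = 2)
    (hdist : ∀ v : Fin n → ZMod 2,
      ((v ∈ CZ ∧ v ∉ dualCode CX) ∨ (v ∈ CX ∧ v ∉ dualCode CZ)) →
        3 ≤ hammingNorm v)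
    (hoverlap : ∃ x ∈ SX, ∃ z ∈ SZ, (suppF x ∩ suppF z).card = 4) :
    ∃ i j : Fin n, i ≠ j ∧
      (Pi.single i 1 + Pi.single j 1 : Fin n → ZMod 2) ∈ dualCode CX ∧
      (Pi.single i 1 + Pi.single j 1 : Fin n → ZMod 2) ∈ dualCode CZ := by
  classical
  obtain ⟨x, hxS, z, hzS, hcard⟩ := hoverlap
  -- the supports of x and z coincide
  have hsx : suppF x ∩ suppF z = suppF x := by
    apply Finset.eq_of_subset_of_card_le Finset.inter_subset_left
    rw [hcard]
    exact (hammingNorm_eq_card_suppF x) ▸ hwX x hxS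
  have hsz : suppF x ∩ suppF z = suppF z := by
    apply Finset.eq_of_subset_of_card_le Finset.inter_subset_right
    rw [hcard]
    exact (hammingNorm_eq_card_suppF z) ▸ hwZ z hzS
  have hsupp_eq : suppF x = suppF z := by rw [← hsx, hsz]
  -- x and z are the same vector
  have hxz : x = z := by
    funext m
    by_cases hm : x m = 0
    · by_cases hm' : z m = 0
      · rw [hm, hm']
      · exfalso
        have : m ∈ suppF x := by
          rw [hsupp_eq]
          exact Finset.mem_filter.mpr ⟨Finset.mem_univ m, hm'⟩
        exact (Finset.mem_filter.mp this).2 hm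
    · have : m ∈ suppF z := by
        rw [← hsupp_eq]
        exact Finset.mem_filter.mpr ⟨Finset.mem_univ m, hm⟩
      rw [zmod2_ne_zero hm, zmod2_ne_zero (Finset.mem_filter.mp this).2]
  -- memberships in the dual codes
  have hxdX : x ∈ dualCode CX := by
    rw [← hSX]
    exact Submodule.subset_span (by simpa using hxS)
  have hxdZ : x ∈ dualCode CZ := by
    rw [← hSZ, hxz]
    exact Submodule.subset_span (by simpa using hzS)
  have hCSS2 : dualCode CZ ≤ CX := by
    have h := dualCode_le_dualCode hCSS
    rwa [dual_dual] at h
  -- every check is orthogonal to x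
  have hX0 : ∀ s ∈ SX, dotp s x = 0 := by
    intro s hs
    have hsd : s ∈ dualCode CX := by
      rw [← hSX]; exact Submodule.subset_span (by simpa using hs)
    rw [dotp_comm]
    exact hxdZ s (hCSS hsd)
  have hZ0 : ∀ t ∈ SZ, dotp t x = 0 := by
    intro t ht
    have htd : t ∈ dualCode CZ := by
      rw [← hSZ]; exact Submodule.subset_span (by simpa using ht)
    rw [dotp_comm]
    exact hxdX t (hCSS2 htd)
  -- pick a qubit i in the support
  have hne : (suppF x).Nonempty := by
    rw [← hsx]
    exact Finset.card_pos.mp (by rw [hcard]; norm_num)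
  obtain ⟨i, hi⟩ := hne
  have hxi : x i ≠ 0 := (Finset.mem_filter.mp hi).2
  have hzi : z i ≠ 0 := by rw [← hxz]; exact hxi
  -- the second X check through i
  have hy : ∃ y ∈ SX, y ≠ x ∧ y i ≠ 0 := by
    have hxf : x ∈ SX.filter fun s => s i ≠ 0 := Finset.mem_filter.mpr ⟨hxS, hxi⟩
    have hcard1 : ((SX.filter fun s => s i ≠ 0).erase x).card = 1 := by
      rw [Finset.card_erase_of_mem hxf, hdegX i]
    obtain ⟨y, hy⟩ := Finset.card_eq_one.mp hcard1
    have hymem : y ∈ (SX.filter fun s => s i ≠ 0).erase x := by rw [hy]; simp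
    obtain ⟨hyne, hyf⟩ := Finset.mem_erase.mp hymem
    exact ⟨y, (Finset.mem_filter.mp hyf).1, hyne, (Finset.mem_filter.mp hyf).2⟩
  obtain ⟨y, hyS, hyx, hyi⟩ := hy
  -- the second Z check through i
  have hw : ∃ w ∈ SZ, w ≠ z ∧ w i ≠ 0 := by
    have hzf : z ∈ SZ.filter fun s => s i ≠ 0 := Finset.mem_filter.mpr ⟨hzS, hzi⟩
    have hcard1 : ((SZ.filter fun s => s i ≠ 0).erase z).card = 1 := by
      rw [Finset.card_erase_of_mem hzf, hdegZ i]
    obtain ⟨w, hwset⟩ := Finset.card_eq_one.mp hcard1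
    have hwmem : w ∈ (SZ.filter fun s => s i ≠ 0).erase z := by rw [hwset]; simp
    obtain ⟨hwne, hwf⟩ := Finset.mem_erase.mp hwmem
    exact ⟨w, (Finset.mem_filter.mp hwf).1, hwne, (Finset.mem_filter.mp hwf).2⟩
  obtain ⟨w, hwS, hwz, hwi⟩ := hw
  -- second support point j of y (in supp x), and k of w (in supp x)
  obtain ⟨j, hji, hxj, hyj⟩ := exists_second (hX0 y hyS) hxi hyi
  obtain ⟨k, hki, hxk, hwk⟩ := exists_second (hZ0 w hwS) hxi hwi
  have hzj : z j ≠ 0 := by rw [← hxz]; exact hxj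
  have hzk : z k ≠ 0 := by rw [← hxz]; exact hxk
  -- membership makers
  have memCX : ∀ {a b : Fin n}, (∀ s ∈ SX, s a + s b = 0) →
      (Pi.single a 1 + Pi.single b 1 : Fin n → ZMod 2) ∈ CX := by
    intro a b h
    have hmem : (Pi.single a 1 + Pi.single b 1 : Fin n → ZMod 2) ∈
        dualCode (Submodule.span (ZMod 2) (↑SX : Set (Fin n → ZMod 2))) :=
      mem_dualCode_span fun s hs => by rw [dotp_pair]; exact h s hs
    rwa [hSX, dual_dual] at hmem
  have memCZ : ∀ {a b : Fin n}, (∀ t ∈ SZ, t a + t b = 0) →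
      (Pi.single a 1 + Pi.single b 1 : Fin n → ZMod 2) ∈ CZ := by
    intro a b h
    have hmem : (Pi.single a 1 + Pi.single b 1 : Fin n → ZMod 2) ∈
        dualCode (Submodule.span (ZMod 2) (↑SZ : Set (Fin n → ZMod 2))) :=
      mem_dualCode_span fun t ht => by rw [dotp_pair]; exact h t ht
    rwa [hSZ, dual_dual] at hmem
  -- e_{i,j} is orthogonal to all X checks
  have eijCX : (Pi.single i 1 + Pi.single j 1 : Fin n → ZMod 2) ∈ CX :=
    memCX fun s hs => perp_all hdegX hxS hyS (Ne.symm hyx) hxi hxj hyi hyj hs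
  by_cases hwj : w j ≠ 0
  · -- case 1: the second Z check through i also contains j
    have eijCZ : (Pi.single i 1 + Pi.single j 1 : Fin n → ZMod 2) ∈ CZ :=
      memCZ fun t ht => perp_all hdegZ hzS hwS (Ne.symm hwz) hzi hzj hwi hwj ht
    refine ⟨i, j, hji.symm, ?_, ?_⟩
    · by_contra hcon
      have h3 := hdist _ (Or.inl ⟨eijCZ, hcon⟩)
      rw [hn_pair hji.symm] at h3
      omega
    · by_contra hcon
      have h3 := hdist _ (Or.inr ⟨eijCX, hcon⟩)
      rw [hn_pair hji.symm] at h3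
      omega
  · -- case 2: contradiction
    push_neg at hwj
    have hkj : k ≠ j := fun h => hwk (h ▸ hwj)
    have eikCZ : (Pi.single i 1 + Pi.single k 1 : Fin n → ZMod 2) ∈ CZ :=
      memCZ fun t ht => perp_all hdegZ hzS hwS (Ne.symm hwz) hzi hzk hwi hwk ht
    have d2 : (Pi.single i 1 + Pi.single k 1 : Fin n → ZMod 2) ∈ dualCode CX := by
      by_contra hcon
      have h3 := hdist _ (Or.inl ⟨eikCZ, hcon⟩)
      rw [hn_pair hki.symm] at h3
      omega
    exfalso
    have h0 : dotp (Pi.single i 1 + Pi.single k 1 : Fin n → ZMod 2)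
        (Pi.single i 1 + Pi.single j 1 : Fin n → ZMod 2) = 0 := d2 _ eijCX
    rw [dotp_pair] at h0
    have hval : (Pi.single i 1 + Pi.single j 1 : Fin n → ZMod 2) i = 1 := by
      simp [Pi.single_apply, hji.symm, Ne.symm hji]
    have hvalk : (Pi.single i 1 + Pi.single j 1 : Fin n → ZMod 2) k = 0 := by
      simp [Pi.single_apply, hki, hkj]
    rw [hval, hvalk, add_zero] at h0
    exact one_ne_zero h0
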